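/- Let ε > 0 and δ ≤ min(1, ε), and let W*_1, ..., W*_n be i.i.d. Uniform[−1,1] random variables with n ≥ C·log(2/δ) for a sufficiently large absolute constant C. Then with probability at least 1 − δ, for every W ∈ [−1/2, 1/2] there exists a subset S ⊆ {1, ..., n} such that |W − Σ_{i∈S} W*_i| ≤ ε. -/

import Mathlib

/-!
Lueker's potential argument. Let `I = [-1/2, 1/2]`, let `T ⊆ ℝ` be the set of points within `r`
of a subset sum of the samples drawn so far, and let `Φ = |I \ T| / |I ∩ T|`. A new sample `x`
turns `T` into `T ∪ (T + x)`, gaining at least `g(x) = |(I \ T) ∩ (x + (I ∩ T))|` of target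
volume. By Fubini `g` has mean `|I \ T| |I ∩ T| / 2`, and `g ≤ |I ∩ T|`, so convexity of
`g ↦ 1 / (|I ∩ T| + g)` gives `E Φ' ≤ (3/4) Φ`. Initially `[-r, r] ⊆ T`, so after `n` samples
`E Φ ≤ (3/4)^n / r`, and by Markov's inequality `|I \ T| < r` except with probability
`(3/4)^n / r²`. When `|I \ T| < r`, every point of `I` is within `r` of `T`, hence within `2r` of
a subset sum.
-/

open MeasureTheory Measure Set ENNReal

noncomputable def uniformNeg11 : Measure ℝ :=
  (2 : ENNReal)⁻¹ • volume.restrict (Set.Icc (-1 : ℝ) 1)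

instance : IsProbabilityMeasure uniformNeg11 := by
  constructor
  simp [uniformNeg11, Real.volume_Icc, one_add_one_eq_two, ENNReal.inv_mul_cancel]

theorem Fin.exists_sum_cons_iff {M : Type*} [AddCommMonoid M] {n : ℕ} (x : M) (W : Fin n → M)
    (P : M → Prop) :
    (∃ S : Finset (Fin (n + 1)), P (∑ i ∈ S, (Fin.cons x W : Fin (n + 1) → M) i)) ↔
      ∃ S : Finset (Fin n), P (∑ i ∈ S, W i) ∨ P (x + ∑ i ∈ S, W i) := by
  constructor
  · rintro ⟨S, hS⟩
    refine ⟨({i | i.succ ∈ S} : Finset (Fin n)), ?_⟩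
    have hsplit : ∑ i ∈ S, (Fin.cons x W : Fin (n + 1) → M) i
        = (if 0 ∈ S then x else 0) + ∑ i ∈ ({i | i.succ ∈ S} : Finset (Fin n)), W i := by
      rw [← Finset.univ_inter S, ← Finset.sum_ite_mem, Fin.sum_univ_succ, Finset.sum_filter]
      simp
    by_cases h0 : 0 ∈ S <;> simp_all
  · rintro ⟨S, hS | hS⟩
    · exact ⟨S.map (Fin.succEmb n), by simpa [Finset.sum_map]⟩
    · exact ⟨.cons 0 (S.map (Fin.succEmb n)) (by simp), by simpa [Finset.sum_map]⟩

theorem lintegral_pi_fin_succ {α : Type*} [MeasurableSpace α] {n : ℕ}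
    (μ : Fin (n + 1) → Measure α) [∀ i, SigmaFinite (μ i)]
    {f : (Fin (n + 1) → α) → ℝ≥0∞} (hf : Measurable f) :
    ∫⁻ W, f W ∂Measure.pi μ =
      ∫⁻ W, ∫⁻ x, f (Fin.cons x W) ∂μ 0 ∂Measure.pi fun i ↦ μ i.succ := by
  set e := MeasurableEquiv.piFinSuccAbove (fun _ ↦ α) 0
  rw [← (measurePreserving_piFinSuccAbove μ 0).symm.lintegral_comp_emb e.symm.measurableEmbedding,
    lintegral_prod_symm' (fun z ↦ f (e.symm z)) (hf.comp e.symm.measurable)]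
  simp [e, MeasurableEquiv.piFinSuccAbove_symm_apply, Fin.insertNthEquiv, Fin.insertNth_zero']

theorem lintegral_measure_inter_preimage_sub {G : Type*} [AddGroup G] [MeasurableSpace G]
    [MeasurableAdd₂ G] [MeasurableNeg G] (μ : Measure G) [SFinite μ] [μ.IsAddLeftInvariant]
    [μ.IsAddRightInvariant] {A B : Set G} (hA : MeasurableSet A) (hB : MeasurableSet B) :
    ∫⁻ x, μ (A ∩ {w | w - x ∈ B}) ∂μ = μ A * μ B := by
  have hs : MeasurableSet {p : G × G | p.2 ∈ A ∧ p.2 - p.1 ∈ B} :=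
    (hA.preimage measurable_snd).inter (hB.preimage (measurable_snd.sub measurable_fst))
  have hs' : MeasurableSet {p : G × G | p.2 + p.1 ∈ A ∧ p.2 ∈ B} :=
    (hA.preimage (measurable_snd.add measurable_fst)).inter (hB.preimage measurable_snd)
  calc ∫⁻ x, μ (A ∩ {w | w - x ∈ B}) ∂μ = μ.prod μ {p : G × G | p.2 ∈ A ∧ p.2 - p.1 ∈ B} :=
        (prod_apply hs).symm
    _ = μ.prod μ {p : G × G | p.2 + p.1 ∈ A ∧ p.2 ∈ B} := by
        rw [← (measurePreserving_prod_add_right μ μ).measure_preimage hs.nullMeasurableSet]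
        simp only [preimage_ofPred_eq, add_sub_cancel_right]
    _ = ∫⁻ v, B.indicator (fun _ ↦ μ A) v ∂μ := by
        refine (prod_apply_symm hs').trans (lintegral_congr fun v ↦ ?_)
        by_cases hv : v ∈ B
        · simp only [preimage_ofPred_eq, hv, and_true, indicator_of_mem]
          exact measure_preimage_add μ v A
        · simp [preimage_ofPred_eq, hv]
    _ = μ A * μ B := lintegral_indicator_const hB _

theorem lintegral_uniformNeg11_measure_inter_preimage_sub {A B : Set ℝ} (hA : MeasurableSet A)
    (hB : MeasurableSet B) (hAI : A ⊆ Icc (-(1 : ℝ)/2) (1/2)) (hBI : B ⊆ Icc (-(1 : ℝ)/2) (1/2)) :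
    ∫⁻ x, volume (A ∩ {w | w - x ∈ B}) ∂uniformNeg11 = 2⁻¹ * (volume A * volume B) := by
  have hsupp : Function.support (fun x ↦ volume (A ∩ {w | w - x ∈ B})) ⊆ Icc (-1) 1 := by
    intro x hx
    obtain ⟨w, hwA, hwB⟩ := nonempty_of_measure_ne_zero hx
    obtain ⟨hA₁, hA₂⟩ := hAI hwA
    obtain ⟨hB₁, hB₂⟩ := hBI hwB
    constructor <;> linarith
  rw [uniformNeg11, lintegral_smul_measure, smul_eq_mul, setLIntegral_eq_of_support_subset hsupp,
    lintegral_measure_inter_preimage_sub volume hA hB]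

namespace RandomSubsetSum

noncomputable def targetVolume : Measure ℝ := volume.restrict (Icc (-(1 : ℝ)/2) (1/2))

instance : IsProbabilityMeasure targetVolume := by
  constructor
  norm_num [targetVolume, Real.volume_Icc]

theorem targetVolume_apply (T : Set ℝ) :
    targetVolume T = volume (T ∩ Icc (-(1 : ℝ)/2) (1/2)) :=
  Measure.restrict_apply' measurableSet_Icc

theorem ofReal_le_targetVolume_closedBall {w r : ℝ} (hw : w ∈ Icc (-(1 : ℝ)/2) (1/2))
    (hr0 : 0 ≤ r) (hr1 : r ≤ 1) : ENNReal.ofReal r ≤ targetVolume (Metric.closedBall w r) := by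
  rw [targetVolume_apply, Real.closedBall_eq_Icc, Icc_inter_Icc, Real.volume_Icc]
  refine ENNReal.ofReal_le_ofReal ?_
  obtain ⟨hw1, hw2⟩ := hw
  rw [le_sub_iff_add_le, le_inf_iff, add_comm, ← le_sub_iff_add_le, ← le_sub_iff_add_le,
    sup_le_iff, sup_le_iff]
  refine ⟨⟨?_, ?_⟩, ?_, ?_⟩ <;> linarith

theorem exists_mem_abs_sub_le_of_targetVolume_compl_lt {T : Set ℝ} {w r : ℝ}
    (hw : w ∈ Icc (-(1 : ℝ)/2) (1/2)) (hr0 : 0 ≤ r) (hr1 : r ≤ 1)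
    (hT : targetVolume Tᶜ < ENNReal.ofReal r) : ∃ t ∈ T, |w - t| ≤ r := by
  by_contra! h
  have hball : Metric.closedBall w r ⊆ Tᶜ := fun t ht htT ↦
    (h t htT).not_ge (by rwa [abs_sub_comm, ← Real.dist_eq])
  exact (hT.trans_le ((ofReal_le_targetVolume_closedBall hw hr0 hr1).trans
    (measure_mono hball))).false

def subsetSumNhd (r : ℝ) {n : ℕ} (W : Fin n → ℝ) : Set ℝ :=
  {w | ∃ S : Finset (Fin n), |w - ∑ i ∈ S, W i| ≤ r}

theorem subsetSumNhd_mono {r s : ℝ} (hrs : r ≤ s) {n : ℕ} (W : Fin n → ℝ) :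
    subsetSumNhd r W ⊆ subsetSumNhd s W :=
  fun _ ⟨S, hS⟩ ↦ ⟨S, hS.trans hrs⟩

theorem subsetSumNhd_cons (r x : ℝ) {n : ℕ} (W : Fin n → ℝ) :
    subsetSumNhd r (Fin.cons x W : Fin (n + 1) → ℝ) =
      subsetSumNhd r W ∪ {w | w - x ∈ subsetSumNhd r W} := by
  ext w
  simpa [subsetSumNhd, sub_add_eq_sub_sub, exists_or] using
    Fin.exists_sum_cons_iff x W (fun s ↦ |w - s| ≤ r)

theorem isClosed_setOf_mem_subsetSumNhd (r : ℝ) (n : ℕ) :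
    IsClosed {p : (Fin n → ℝ) × ℝ | p.2 ∈ subsetSumNhd r p.1} := by
  have : {p : (Fin n → ℝ) × ℝ | p.2 ∈ subsetSumNhd r p.1} =
      ⋃ S : Finset (Fin n), {p | |p.2 - ∑ i ∈ S, p.1 i| ≤ r} := by
    ext; simp [subsetSumNhd]
  rw [this]
  exact isClosed_iUnion_of_finite fun S ↦ isClosed_le (by fun_prop) continuous_const

theorem measurableSet_subsetSumNhd (r : ℝ) {n : ℕ} (W : Fin n → ℝ) :
    MeasurableSet (subsetSumNhd r W) :=
  ((isClosed_setOf_mem_subsetSumNhd r n).preimage (Continuous.prodMk_right W)).measurableSet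

theorem ofReal_le_targetVolume_subsetSumNhd {r : ℝ} (hr0 : 0 ≤ r) (hr1 : r ≤ 1) {n : ℕ}
    (W : Fin n → ℝ) : ENNReal.ofReal r ≤ targetVolume (subsetSumNhd r W) :=
  (ofReal_le_targetVolume_closedBall (w := 0) (by norm_num) hr0 hr1).trans <|
    measure_mono fun w hw ↦ ⟨∅, by simpa [← Real.dist_eq] using hw⟩

theorem Icc_subset_subsetSumNhd_of_targetVolume_compl_lt {r : ℝ} (hr0 : 0 ≤ r) (hr1 : r ≤ 1)
    {n : ℕ} {W : Fin n → ℝ} (hW : targetVolume (subsetSumNhd r W)ᶜ < ENNReal.ofReal r) :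
    Icc (-(1 : ℝ)/2) (1/2) ⊆ subsetSumNhd (r + r) W := by
  intro w hw
  obtain ⟨t, ⟨S, hS⟩, hwt⟩ := exists_mem_abs_sub_le_of_targetVolume_compl_lt hw hr0 hr1 hW
  exact ⟨S, (abs_sub_le w t _).trans (add_le_add hwt hS)⟩

noncomputable def uncoveredRatio (T : Set ℝ) : ℝ≥0∞ := targetVolume Tᶜ / targetVolume T

theorem measurable_uncoveredRatio_subsetSumNhd (r : ℝ) (n : ℕ) :
    Measurable fun W : Fin n → ℝ ↦ uncoveredRatio (subsetSumNhd r W) :=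
  have hs := (isClosed_setOf_mem_subsetSumNhd r n).measurableSet
  (measurable_measure_prodMk_left hs.compl).div (measurable_measure_prodMk_left hs)

noncomputable def coverGain (T : Set ℝ) (x : ℝ) : ℝ≥0∞ :=
  volume ((Tᶜ ∩ Icc (-(1 : ℝ)/2) (1/2)) ∩ {w | w - x ∈ T ∩ Icc (-(1 : ℝ)/2) (1/2)})

theorem measurable_coverGain {T : Set ℝ} (hT : MeasurableSet T) : Measurable (coverGain T) :=
  measurable_measure_prodMk_left (s := {p : ℝ × ℝ | p.2 ∈ Tᶜ ∩ Icc (-(1 : ℝ)/2) (1/2) ∧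
      p.2 - p.1 ∈ T ∩ Icc (-(1 : ℝ)/2) (1/2)})
    (((hT.compl.inter measurableSet_Icc).preimage measurable_snd).inter
      ((hT.inter measurableSet_Icc).preimage (measurable_snd.sub measurable_fst)))

theorem lintegral_coverGain {T : Set ℝ} (hT : MeasurableSet T) :
    ∫⁻ x, coverGain T x ∂uniformNeg11 = 2⁻¹ * (targetVolume Tᶜ * targetVolume T) := by
  rw [targetVolume_apply, targetVolume_apply]
  exact lintegral_uniformNeg11_measure_inter_preimage_sub (hT.compl.inter measurableSet_Icc)
    (hT.inter measurableSet_Icc) inter_subset_right inter_subset_right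

theorem coverGain_le_targetVolume_compl (T : Set ℝ) (x : ℝ) :
    coverGain T x ≤ targetVolume Tᶜ :=
  (measure_mono inter_subset_left).trans_eq (targetVolume_apply _).symm

theorem coverGain_le_targetVolume (T : Set ℝ) (x : ℝ) : coverGain T x ≤ targetVolume T := by
  refine (measure_mono inter_subset_right).trans_eq ?_
  rw [targetVolume_apply]
  simp only [sub_eq_add_neg]
  exact measure_preimage_add_right volume (-x) _

theorem targetVolume_add_coverGain_le {T : Set ℝ} (hT : MeasurableSet T) (x : ℝ) :
    targetVolume T + coverGain T x ≤ targetVolume (T ∪ {w | w - x ∈ T}) := by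
  have hdisj : Disjoint (T ∩ Icc (-(1 : ℝ)/2) (1/2))
      ((Tᶜ ∩ Icc (-(1 : ℝ)/2) (1/2)) ∩ {w | w - x ∈ T ∩ Icc (-(1 : ℝ)/2) (1/2)}) :=
    disjoint_left.2 fun w hwT hw ↦ hw.1.1 hwT.1
  rw [targetVolume_apply, coverGain, ← measure_union hdisj ((hT.compl.inter measurableSet_Icc).inter
      ((hT.inter measurableSet_Icc).preimage (measurable_sub_const x))), targetVolume_apply]
  exact measure_mono (union_subset (fun w hw ↦ ⟨Or.inl hw.1, hw.2⟩)
    (fun w hw ↦ ⟨Or.inr hw.2.1, hw.1.2⟩))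

theorem uncoveredRatio_union_le {T : Set ℝ} (hT : MeasurableSet T) (x : ℝ) :
    uncoveredRatio (T ∪ {w | w - x ∈ T}) ≤
      (targetVolume Tᶜ - coverGain T x) / (targetVolume T + coverGain T x) := by
  have hT' : MeasurableSet (T ∪ {w | w - x ∈ T}) := hT.union (hT.preimage (measurable_sub_const x))
  have hgain := targetVolume_add_coverGain_le hT x
  refine ENNReal.div_le_div ?_ hgain
  rw [prob_compl_eq_one_sub hT', ← prob_add_prob_compl (μ := targetVolume) hT, tsub_le_iff_right]
  calc targetVolume T + targetVolume Tᶜ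
      = targetVolume Tᶜ - coverGain T x + (targetVolume T + coverGain T x) := by
        rw [add_left_comm, tsub_add_cancel_of_le (coverGain_le_targetVolume_compl T x)]
    _ ≤ _ := by gcongr

/-- The chord bound `1 / (c + g) ≤ 1 / c - g / (2 c²)` for the convex function `g ↦ 1 / (c + g)`
on `[0, c]`, written with `u = 1 - c`. -/
theorem sub_div_add_add_div_two_mul_sq_le {c u g : ℝ≥0∞} (hcu : c + u = 1) (hc : c ≠ 0)
    (hgc : g ≤ c) (hgu : g ≤ u) : (u - g) / (c + g) + g / (2 * c ^ 2) ≤ u / c := by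
  have hct : c ≠ ∞ := ne_top_of_le_ne_top one_ne_top (hcu ▸ le_self_add)
  have hut : u ≠ ∞ := ne_top_of_le_ne_top one_ne_top (hcu ▸ le_add_self)
  have hgt : g ≠ ∞ := ne_top_of_le_ne_top hct hgc
  have hcu' : c.toReal + u.toReal = 1 := by rw [← toReal_add hct hut, hcu, toReal_one]
  have hc' : 0 < c.toReal := toReal_pos hc hct
  have hgc' : g.toReal ≤ c.toReal := toReal_mono hct hgc
  have hg' : 0 ≤ g.toReal := toReal_nonneg
  rw [← toReal_le_toReal (by finiteness) (by finiteness),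
    toReal_add (by finiteness) (by finiteness), toReal_div, toReal_div, toReal_div,
    toReal_sub_of_le hgu hut, toReal_add hct hgt, toReal_mul, toReal_pow, toReal_ofNat,
    div_add_div _ _ (by positivity) (by positivity),
    div_le_div_iff₀ (by positivity) hc']
  rw [show u.toReal = 1 - c.toReal by linarith]
  nlinarith [mul_nonneg hg' (sub_nonneg.2 hgc'), mul_pos hc' hc']

theorem div_eq_three_quarters_mul_div_add {c u : ℝ≥0∞} (hc : c ≠ 0) (hct : c ≠ ∞) (hut : u ≠ ∞) :
    u / c = 3 / 4 * (u / c) + 2⁻¹ * (u * c) / (2 * c ^ 2) := by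
  have hc' : c.toReal ≠ 0 := (toReal_pos hc hct).ne'
  rw [← toReal_eq_toReal_iff' (by finiteness) (by finiteness),
    toReal_add (by finiteness) (by finiteness)]
  simp only [toReal_mul, toReal_inv, toReal_div, toReal_pow, toReal_ofNat]
  field_simp
  ring

theorem lintegral_uncoveredRatio_union_le {T : Set ℝ} (hT : MeasurableSet T)
    (hT0 : targetVolume T ≠ 0) :
    ∫⁻ x, uncoveredRatio (T ∪ {w | w - x ∈ T}) ∂uniformNeg11 ≤ 3 / 4 * uncoveredRatio T := by
  set c := targetVolume T
  set u := targetVolume Tᶜ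
  have hcu : c + u = 1 := prob_add_prob_compl hT
  have hpointwise : ∀ x, uncoveredRatio (T ∪ {w | w - x ∈ T}) + coverGain T x / (2 * c ^ 2) ≤
      u / c := fun x ↦ (add_le_add_left (uncoveredRatio_union_le hT x) _).trans
    (sub_div_add_add_div_two_mul_sq_le hcu hT0 (coverGain_le_targetVolume T x)
      (coverGain_le_targetVolume_compl T x))
  refine ENNReal.le_of_add_le_add_right (a := 2⁻¹ * (u * c) / (2 * c ^ 2)) (by finiteness) ?_
  calc ∫⁻ x, uncoveredRatio (T ∪ {w | w - x ∈ T}) ∂uniformNeg11 + 2⁻¹ * (u * c) / (2 * c ^ 2)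
      = ∫⁻ x, uncoveredRatio (T ∪ {w | w - x ∈ T}) + coverGain T x / (2 * c ^ 2)
          ∂uniformNeg11 := by
        simp_rw [lintegral_add_right _ ((measurable_coverGain hT).div_const _),
          div_eq_mul_inv (coverGain T _)]
        rw [lintegral_mul_const _ (measurable_coverGain hT), lintegral_coverGain hT,
          div_eq_mul_inv]
    _ ≤ ∫⁻ _, u / c ∂uniformNeg11 := lintegral_mono hpointwise
    _ = 3 / 4 * uncoveredRatio T + 2⁻¹ * (u * c) / (2 * c ^ 2) := by
        rw [lintegral_const, measure_univ, mul_one]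
        exact div_eq_three_quarters_mul_div_add hT0 (measure_ne_top _ _) (measure_ne_top _ _)

theorem lintegral_uncoveredRatio_subsetSumNhd_le {r : ℝ} (hr0 : 0 < r) (hr1 : r ≤ 1) (n : ℕ) :
    ∫⁻ W, uncoveredRatio (subsetSumNhd r W) ∂Measure.pi (fun _ : Fin n ↦ uniformNeg11) ≤
      (3 / 4) ^ n * (ENNReal.ofReal r)⁻¹ := by
  induction n with
  | zero =>
    have hbound : ∀ W : Fin 0 → ℝ, uncoveredRatio (subsetSumNhd r W) ≤ (ENNReal.ofReal r)⁻¹ :=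
      fun W ↦ (ENNReal.div_le_div prob_le_one
        (ofReal_le_targetVolume_subsetSumNhd hr0.le hr1 W)).trans_eq (one_div _)
    calc _ ≤ ∫⁻ _, (ENNReal.ofReal r)⁻¹ ∂Measure.pi (fun _ : Fin 0 ↦ uniformNeg11) :=
          lintegral_mono hbound
      _ = _ := by simp
  | succ n ih =>
    rw [lintegral_pi_fin_succ _ (measurable_uncoveredRatio_subsetSumNhd r _)]
    calc ∫⁻ W, ∫⁻ x, uncoveredRatio (subsetSumNhd r (Fin.cons x W : Fin (n + 1) → ℝ))
          ∂uniformNeg11 ∂Measure.pi (fun _ : Fin n ↦ uniformNeg11)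
        ≤ ∫⁻ W, 3 / 4 * uncoveredRatio (subsetSumNhd r W)
          ∂Measure.pi (fun _ : Fin n ↦ uniformNeg11) := lintegral_mono fun W ↦ by
          simp_rw [subsetSumNhd_cons]
          exact lintegral_uncoveredRatio_union_le (measurableSet_subsetSumNhd r W)
            ((ofReal_pos.2 hr0).trans_le (ofReal_le_targetVolume_subsetSumNhd hr0.le hr1 W)).ne'
      _ = 3 / 4 * ∫⁻ W, uncoveredRatio (subsetSumNhd r W)
          ∂Measure.pi (fun _ : Fin n ↦ uniformNeg11) := lintegral_const_mul' _ _ (by finiteness)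
      _ ≤ 3 / 4 * ((3 / 4) ^ n * (ENNReal.ofReal r)⁻¹) := by gcongr
      _ = (3 / 4) ^ (n + 1) * (ENNReal.ofReal r)⁻¹ := by ring

theorem measure_not_Icc_subset_subsetSumNhd_le {ε : ℝ} (hε0 : 0 < ε) (hε2 : ε ≤ 2) (n : ℕ) :
    Measure.pi (fun _ : Fin n ↦ uniformNeg11)
        {W | Icc (-(1 : ℝ)/2) (1/2) ⊆ subsetSumNhd ε W}ᶜ ≤
      ENNReal.ofReal (4 * (3 / 4) ^ n / ε ^ 2) := by
  set r := ε / 2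
  have hr0 : 0 < r := by positivity
  have hr1 : r ≤ 1 := (div_le_one₀ two_pos).2 hε2
  have hsub : {W | Icc (-(1 : ℝ)/2) (1/2) ⊆ subsetSumNhd ε W}ᶜ ⊆
      {W : Fin n → ℝ | ENNReal.ofReal r ≤ uncoveredRatio (subsetSumNhd r W)} := by
    refine fun W hW ↦ mem_ofPred.2 <| not_lt.1 fun hlt ↦ hW ?_
    refine (Icc_subset_subsetSumNhd_of_targetVolume_compl_lt hr0.le hr1 ?_).trans_eq
      (by rw [add_halves])
    exact ((div_one _).symm.le.trans (ENNReal.div_le_div_left prob_le_one _)).trans_lt hlt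
  calc _ ≤ Measure.pi (fun _ : Fin n ↦ uniformNeg11)
        {W | ENNReal.ofReal r ≤ uncoveredRatio (subsetSumNhd r W)} := measure_mono hsub
    _ ≤ (∫⁻ W, uncoveredRatio (subsetSumNhd r W) ∂Measure.pi (fun _ : Fin n ↦ uniformNeg11)) /
        ENNReal.ofReal r :=
      meas_ge_le_lintegral_div (measurable_uncoveredRatio_subsetSumNhd r n).aemeasurable
        (ofReal_pos.2 hr0).ne' ofReal_ne_top
    _ ≤ (3 / 4) ^ n * (ENNReal.ofReal r)⁻¹ / ENNReal.ofReal r := by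
      gcongr
      exact lintegral_uncoveredRatio_subsetSumNhd_le hr0 hr1 n
    _ = ENNReal.ofReal (4 * (3 / 4) ^ n / ε ^ 2) := by
      rw [← toReal_eq_toReal_iff' (by finiteness) ofReal_ne_top, toReal_ofReal (by positivity)]
      simp only [toReal_div, toReal_mul, toReal_pow, toReal_inv, toReal_ofReal hr0.le,
        toReal_ofNat, r]
      field_simp
      ring

end RandomSubsetSum

theorem three_quarters_pow_le {δ : ℝ} (hδ : 0 < δ) {n : ℕ}
    (hn : 3 / Real.log (4 / 3) * Real.log (2 / δ) ≤ n) : (3 / 4 : ℝ) ^ n ≤ (δ / 2) ^ 3 := by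
  have hlog : 0 < Real.log (4 / 3) := Real.log_pos (by norm_num)
  rw [div_mul_eq_mul_div, div_le_iff₀ hlog] at hn
  rw [← Real.log_le_log_iff (by positivity) (by positivity), Real.log_pow, Real.log_pow,
    ← inv_div (4 : ℝ), Real.log_inv, ← inv_div 2 δ, Real.log_inv]
  push_cast
  linarith

/-- Lueker's random subset-sum theorem: there is an absolute constant `C` such that if
`n ≥ C log(2/δ)` i.i.d. `Uniform[-1,1]` samples are drawn, then with probability at least
`1 - δ`, every target `W ∈ [-1/2, 1/2]` is approximated within `ε` by some subset sum. -/
theorem random_subset_sum : ∃ C : ℝ, 0 < C ∧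
    ∀ ε δ : ℝ, 0 < ε → 0 < δ → δ ≤ min 1 ε →
    ∀ n : ℕ, C * Real.log (2 / δ) ≤ n →
    (Measure.pi fun _ : Fin n => uniformNeg11)
      {W : Fin n → ℝ | ∀ w ∈ Set.Icc (-(1 : ℝ)/2) (1/2),
        ∃ S : Finset (Fin n), |w - ∑ i ∈ S, W i| ≤ ε}
      ≥ 1 - ENNReal.ofReal δ := by
  refine ⟨3 / Real.log (4 / 3), div_pos three_pos (Real.log_pos (by norm_num)), ?_⟩
  intro ε δ hε hδ hδε n hn
  obtain ⟨hδ1, hδε⟩ := le_min_iff.1 hδε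
  -- `min ε 1` still dominates `δ`, and keeps the covering radius `min ε 1 / 2` at most `1`.
  have hfail := RandomSubsetSum.measure_not_Icc_subset_subsetSumNhd_le (lt_min hε one_pos)
    ((min_le_right _ _).trans one_le_two) n
  have hnum : 4 * (3 / 4 : ℝ) ^ n / min ε 1 ^ 2 ≤ δ := by
    have := three_quarters_pow_le hδ hn
    have := pow_le_pow_left₀ hδ.le (le_min hδε hδ1) 2
    rw [div_le_iff₀ (by positivity)]
    nlinarith
  have hmono :
      {W : Fin n → ℝ | Icc (-(1 : ℝ)/2) (1/2) ⊆ RandomSubsetSum.subsetSumNhd (min ε 1) W} ⊆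
        {W | Icc (-(1 : ℝ)/2) (1/2) ⊆ RandomSubsetSum.subsetSumNhd ε W} :=
    fun W hW ↦ hW.trans (RandomSubsetSum.subsetSumNhd_mono (min_le_left _ _) W)
  rw [ge_iff_le, tsub_le_iff_right]
  calc 1 = Measure.pi (fun _ : Fin n ↦ uniformNeg11) univ := measure_univ.symm
    _ ≤ _ := measure_univ_le_add_compl _
    _ ≤ _ := add_le_add (measure_mono hmono) (hfail.trans (ofReal_le_ofReal hnum))
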